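/- For r ≥ 4, the Hamming graph K_r □ K_r is (2r−2)-metric antidimensional and adim_{2r−2}(K_r □ K_r) = 1: every single vertex is a (2r−2)-ARS, and no k-ARS exists for k > 2r−2. -/

import Mathlib

open SimpleGraph

/-- Two vertices have the same distances to every vertex of `S`. -/
def sameDists {V : Type*} (G : SimpleGraph V) (S : Set V) (x y : V) : Prop :=
  ∀ z ∈ S, G.dist x z = G.dist y z

/-- The equivalence class (outside `S`) of `x` under the equal-distance relation `R_S`. -/
def cls {V : Type*} (G : SimpleGraph V) (S : Set V) (x : V) : Set V :=
  {y | y ∉ S ∧ sameDists G S x y}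

/-- `S` is a `k`-antiresolving set: `S` is nonempty, does not cover `V`, and the minimum
size of an equivalence class of `R_S` on `V ∖ S` equals `k`. -/
def IsKARS {V : Type*} (G : SimpleGraph V) (k : ℕ) (S : Set V) : Prop :=
  S.Nonempty ∧ Sᶜ.Nonempty ∧
    (∀ x ∉ S, k ≤ (cls G S x).ncard) ∧ ∃ x ∉ S, (cls G S x).ncard = k

/-- The `k`-metric antidimension: the smallest cardinality of a `k`-antiresolving set,
`⊤` (i.e. `+∞`) if none exists. -/
noncomputable def adim {V : Type*} (G : SimpleGraph V) (k : ℕ) : ℕ∞ :=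
  sInf ((fun S => (S.ncard : ℕ∞)) '' {S : Set V | IsKARS G k S})

/-!
In `K_α □ K_β` the graph distance is the Hamming distance, so the classes of a singleton `{x}`
are the two spheres around `x`: the neighbourhood, with `(|α| - 1) + (|β| - 1)` vertices, and the
vertices differing from `x` in both coordinates, with `(|α| - 1)(|β| - 1)` vertices, which is not
fewer once `|α|, |β| ≥ 3`. Conversely, in a connected graph some `u ∉ S` is adjacent to some
`s ∈ S`, and every vertex at the same distance from `s` as `u` is a neighbour of `s`, so the
class of `u` has at most `deg s` elements.
-/

namespace SimpleGraph

variable {V α β : Type*} {G : SimpleGraph V}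

lemma ncard_neighborSet (v : V) [Fintype (G.neighborSet v)] :
    (G.neighborSet v).ncard = G.degree v := by
  rw [← card_neighborSet_eq_degree, Set.ncard_eq_toFinset_card', Set.toFinset_card]

lemma dist_boxProd {G : SimpleGraph α} {H : SimpleGraph β} (hG : G.Connected) (hH : H.Connected)
    (x y : α × β) : (G □ H).dist x y = G.dist x.1 y.1 + H.dist x.2 y.2 := by
  rw [dist, edist_boxProd, ENat.toNat_add (edist_ne_top_iff_reachable.mpr (hG _ _))
    (edist_ne_top_iff_reachable.mpr (hH _ _))]
  rfl

lemma IsRegularOfDegree.boxProd [DecidableEq α] [DecidableEq β] {G : SimpleGraph α}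
    {H : SimpleGraph β} [G.LocallyFinite] [H.LocallyFinite] {d e : ℕ}
    (hG : G.IsRegularOfDegree d) (hH : H.IsRegularOfDegree e) :
    (G □ H).IsRegularOfDegree (d + e) := fun x => by
  rw [degree_boxProd, hG.degree_eq, hH.degree_eq]

end SimpleGraph

section General

variable {V : Type*} {G : SimpleGraph V}

lemma cls_subset_neighborSet {S : Set V} {s u : V} (hs : s ∈ S) (hus : G.Adj u s) :
    cls G S u ⊆ G.neighborSet s := fun _ ⟨_, hy⟩ =>
  (dist_eq_one_iff_adj.mp ((hy s hs).symm.trans (dist_eq_one_iff_adj.mpr hus))).symm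

lemma cls_singleton_of_adj {x y : V} (h : G.Adj y x) : cls G {x} y = G.neighborSet x := by
  refine (cls_subset_neighborSet (Set.mem_singleton x) h).antisymm
    fun z hz => ⟨(G.ne_of_adj hz).symm, ?_⟩
  rintro _ rfl
  rw [dist_eq_one_iff_adj.mpr h, dist_eq_one_iff_adj.mpr (G.adj_symm hz)]

lemma IsKARS.exists_le_degree [G.LocallyFinite] (hG : G.Connected) {k : ℕ} {S : Set V}
    (hS : IsKARS G k S) : ∃ s, k ≤ G.degree s := by
  obtain ⟨⟨s, hs⟩, ⟨v, hv⟩, hk, -⟩ := hS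
  obtain ⟨d, -, hds, hdv⟩ := (hG s v).some.exists_boundary_dart S hs hv
  refine ⟨d.fst, (hk _ hdv).trans ?_⟩
  calc (cls G S d.snd).ncard ≤ (G.neighborSet d.fst).ncard :=
        Set.ncard_le_ncard (cls_subset_neighborSet hds d.adj.symm)
    _ = G.degree d.fst := ncard_neighborSet _

lemma adim_eq_one_of_isKARS_singleton [Finite V] {k : ℕ} {x : V} (hx : IsKARS G k {x}) :
    adim G k = 1 := by
  refine le_antisymm (sInf_le ⟨{x}, hx, by simp⟩) (le_sInf ?_)
  rintro _ ⟨S, hS, rfl⟩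
  exact Nat.one_le_cast.mpr hS.1.ncard_pos

end General

section Hamming

variable {α β : Type*} [DecidableEq α] [DecidableEq β]

lemma cls_singleton_top_boxProd_top [Nonempty α] [Nonempty β] {x y : α × β}
    (h₁ : y.1 ≠ x.1) (h₂ : y.2 ≠ x.2) :
    cls ((⊤ : SimpleGraph α) □ (⊤ : SimpleGraph β)) {x} y = {x.1}ᶜ ×ˢ {x.2}ᶜ := by
  ext z
  simp only [cls, sameDists, Set.mem_singleton_iff, forall_eq, Set.mem_ofPred_eq, Set.mem_prod,
    Set.mem_compl_iff, dist_boxProd connected_top connected_top, completeGraph_eq_top, dist_top,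
    h₁, h₂, if_false]
  grind [Prod.ext_iff]

lemma isKARS_singleton_top_boxProd_top [Fintype α] [Fintype β] (hα : 3 ≤ Fintype.card α)
    (hβ : 3 ≤ Fintype.card β) (x : α × β) :
    IsKARS ((⊤ : SimpleGraph α) □ (⊤ : SimpleGraph β))
      (Fintype.card α - 1 + (Fintype.card β - 1)) {x} := by
  have : Nonempty α := Fintype.card_pos_iff.mp (by omega)
  have : Nonempty β := Fintype.card_pos_iff.mp (by omega)
  have : Nontrivial α := Fintype.one_lt_card_iff_nontrivial.mp (by omega)
  have hreg := (IsRegularOfDegree.top (V := α)).boxProd (IsRegularOfDegree.top (V := β))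
  have ncard_cls_of_adj {y : α × β} (hy : (⊤ □ ⊤).Adj y x) :
      (cls ((⊤ : SimpleGraph α) □ (⊤ : SimpleGraph β)) {x} y).ncard =
        Fintype.card α - 1 + (Fintype.card β - 1) := by
    rw [cls_singleton_of_adj hy, ncard_neighborSet, hreg.degree_eq]
  obtain ⟨a, ha⟩ := exists_ne x.1
  have hadj : (⊤ □ ⊤).Adj (a, x.2) x := by simp [boxProd_adj, ha]
  refine ⟨Set.singleton_nonempty x, ⟨_, hadj.ne⟩, fun y hy => ?_,
    ⟨_, hadj.ne, ncard_cls_of_adj hadj⟩⟩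
  by_cases hyx : (⊤ □ ⊤).Adj y x
  · exact (ncard_cls_of_adj hyx).ge
  have ⟨h₁, h₂⟩ : y.1 ≠ x.1 ∧ y.2 ≠ x.2 := by
    simp only [boxProd_adj, top_adj] at hyx
    grind [Prod.ext_iff]
  rw [cls_singleton_top_boxProd_top h₁ h₂, Set.ncard_prod, Set.ncard_compl, Set.ncard_compl,
    Set.ncard_singleton, Set.ncard_singleton, Nat.card_eq_fintype_card, Nat.card_eq_fintype_card]
  -- `a * b ≥ a + b` for `a, b ≥ 2`
  nlinarith [Nat.sub_add_cancel (by omega : 1 ≤ Fintype.card α),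
    Nat.sub_add_cancel (by omega : 1 ≤ Fintype.card β)]

end Hamming

/-- For `r ≥ 4`, the Hamming graph `K_r □ K_r` is `(2r−2)`-metric antidimensional and
`adim_{2r−2}(K_r □ K_r) = 1`: every singleton is a `(2r−2)`-ARS, and no `k`-ARS exists
for `k > 2r−2`. -/
theorem stmt16 (r : ℕ) (hr : 4 ≤ r) :
    (∀ x : Fin r × Fin r,
      IsKARS ((⊤ : SimpleGraph (Fin r)).boxProd (⊤ : SimpleGraph (Fin r))) (2 * r - 2) {x}) ∧
    adim ((⊤ : SimpleGraph (Fin r)).boxProd (⊤ : SimpleGraph (Fin r))) (2 * r - 2) = 1 ∧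
    ∀ k, 2 * r - 2 < k → ¬∃ S : Set (Fin r × Fin r),
      IsKARS ((⊤ : SimpleGraph (Fin r)).boxProd (⊤ : SimpleGraph (Fin r))) k S := by
  have hcard : Fintype.card (Fin r) = r := Fintype.card_fin r
  have hdeg : Fintype.card (Fin r) - 1 + (Fintype.card (Fin r) - 1) = 2 * r - 2 := by omega
  have hsingleton (x : Fin r × Fin r) :
      IsKARS ((⊤ : SimpleGraph (Fin r)) □ ⊤) (2 * r - 2) {x} :=
    hdeg ▸ isKARS_singleton_top_boxProd_top (by omega) (by omega) x
  have : Nonempty (Fin r) := ⟨⟨0, by omega⟩⟩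
  refine ⟨hsingleton, adim_eq_one_of_isKARS_singleton (hsingleton (Classical.arbitrary _)), ?_⟩
  rintro k hk ⟨S, hS⟩
  obtain ⟨s, hs⟩ := hS.exists_le_degree (connected_top.boxProd connected_top)
  rw [(IsRegularOfDegree.top.boxProd IsRegularOfDegree.top).degree_eq] at hs
  omega
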